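/- Let T be a tree on a finite nonempty vertex type V with n = |V| vertices, and let m ≥ 1 be an integer. Let G be the m-order T-fractal graph of T. Then the Wiener index of G satisfies W(G) = 2(m+2)^2·W(T) − (m+2)·n^2 − (m−1)(m+2)·n + m^2 + 2m. -/

import Mathlib

/-!
The fractal graph `G` of a tree `T` is again a tree: it is connected, and every edge of `T`
contributes `m + 1` vertices and `m + 2` edges. Distances between original vertices double: a walk
in `T` lifts to one of twice the length, and `2 * dist_T(u, ·)` extends to a 1-Lipschitz function
on `G`. A leaf is one step farther than its midpoint from every other vertex, and since `G` is a
tree, a midpoint is at the average distance of the two endpoints of its edge from every vertex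
other than itself and its leaves. So every transmission `∑_y dist(x, y)` of `G` is an explicit combination of
transmissions of `T`, and summing them only needs the tree identity
`∑_v deg v * dist(u, v) = 2 ∑_v dist(u, v) - (n - 1)`: every `v ≠ u` has exactly one neighbour
closer to `u`.
-/

/-- The Wiener index of a finite simple graph: half the sum of the graph
distances over all ordered pairs of vertices. -/
noncomputable def wienerIndex {V : Type*} [Fintype V] (G : SimpleGraph V) : ℚ :=
  (∑ u : V, ∑ v : V, (G.dist u v : ℚ)) / 2

/-- The `m`-order T-fractal graph of `T`: insert one midpoint vertex on every
edge of `T` and attach `m` pendant leaves to each midpoint. -/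
def tFractal {V : Type*} (T : SimpleGraph V) (m : ℕ) :
    SimpleGraph (V ⊕ (T.edgeSet ⊕ (T.edgeSet × Fin m))) :=
  SimpleGraph.fromRel (fun x y =>
    match x, y with
    | Sum.inl u, Sum.inr (Sum.inl e) => u ∈ e.1
    | Sum.inr (Sum.inl e), Sum.inr (Sum.inr (e', _)) => e = e'
    | _, _ => False)

open Finset

namespace SimpleGraph

variable {α : Type*} {H : SimpleGraph α}

lemma le_add_length_of_adj_le_add_one (f : α → ℕ) (hf : ∀ x y, H.Adj x y → f x ≤ f y + 1)
    {x y : α} (p : H.Walk x y) : f x ≤ f y + p.length := by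
  induction p with
  | nil => simp
  | cons h _ ih =>
    have := hf _ _ h
    rw [Walk.length_cons]
    omega

lemma Reachable.le_add_dist_of_adj_le_add_one {x y : α} (hr : H.Reachable x y) (f : α → ℕ)
    (hf : ∀ x y, H.Adj x y → f x ≤ f y + 1) : f x ≤ f y + H.dist x y := by
  obtain ⟨p, hp⟩ := hr.exists_walk_length_eq_dist
  exact hp ▸ le_add_length_of_adj_le_add_one f hf p

lemma dist_eq_dist_add_one_of_forall_adj_iff {ℓ c y : α} (hℓ : ∀ z, H.Adj ℓ z ↔ z = c)
    (hy : ℓ ≠ y) (hr : H.Reachable c y) : H.dist ℓ y = H.dist c y + 1 := by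
  have hadj : H.Adj ℓ c := (hℓ c).2 rfl
  refine le_antisymm ?_ ?_
  · have := hr.dist_triangle_right ℓ
    rw [dist_eq_one_iff_adj.2 hadj] at this
    omega
  · obtain ⟨p, hp⟩ := (hadj.reachable.trans hr).exists_walk_length_eq_dist
    cases p with
    | nil => exact absurd rfl hy
    | cons h q =>
      obtain rfl := (hℓ _).1 h
      rw [← hp, Walk.length_cons]
      exact Nat.add_le_add_right (dist_le q) 1

lemma Reachable.exists_adj_dist_add_one_eq {y c : α} (hr : H.Reachable y c) (hne : y ≠ c) :
    ∃ z, H.Adj z c ∧ H.dist y z + 1 = H.dist y c := by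
  obtain ⟨p, hp⟩ := hr.exists_walk_length_eq_dist
  have hnil : ¬ p.Nil := fun h => hne h.eq
  have hz := p.adj_penultimate hnil
  refine ⟨p.penultimate, hz, le_antisymm ?_ ?_⟩
  · have := dist_le p.dropLast
    have := Walk.length_dropLast_add_one hnil
    omega
  · have := hz.reachable.dist_triangle_right y
    rw [dist_eq_one_iff_adj.2 hz] at this
    exact this

lemma IsAcyclic.eq_of_adj_of_dist_add_one_eq (hH : H.IsAcyclic) {a b c y : α}
    (hr : H.Reachable y c) (ha : H.Adj a c) (hb : H.Adj b c)
    (hda : H.dist y a + 1 = H.dist y c) (hdb : H.dist y b + 1 = H.dist y c) : a = b := by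
  classical
  obtain ⟨p, hp, hpl⟩ := hr.exists_path_of_dist
  have penultimate_eq {x : α} (hx : H.Adj x c) (hdx : H.dist y x + 1 = H.dist y c) :
      x = p.penultimate := by
    obtain ⟨q, hq, hql⟩ := (hr.trans hx.reachable.symm).exists_path_of_dist
    have hc : c ∉ q.support := fun hc => by
      have := (dist_le (q.takeUntil c hc)).trans (q.length_takeUntil_le_length hc)
      omega
    exact hH.eq_penultimate_of_adj_end hp hx.symm
      (hH.mem_support_of_ne_mem_support_of_adj_of_isPath hp hq hx.symm hc)
  rw [penultimate_eq ha hda, penultimate_eq hb hdb]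

lemma IsTree.dist_add_dist_eq_two_mul (hH : H.IsTree) {a b c y : α} (ha : H.Adj a c)
    (hb : H.Adj b c) (hab : a ≠ b) (h : H.dist y a < H.dist y c ∨ H.dist y b < H.dist y c) :
    H.dist y a + H.dist y b = 2 * H.dist y c := by
  have hua := hH.dist_eq_dist_add_one_of_adj y ha
  have hub := hH.dist_eq_dist_add_one_of_adj y hb
  have hpar := hH.isAcyclic.eq_of_adj_of_dist_add_one_eq (hH.connected y c) ha hb
  by_cases hda : H.dist y a + 1 = H.dist y c <;> by_cases hdb : H.dist y b + 1 = H.dist y c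
  · exact absurd (hpar hda hdb) hab
  all_goals omega

section Finite

variable [Fintype α]

noncomputable def transmission (H : SimpleGraph α) (x : α) : ℚ := ∑ y, (H.dist x y : ℚ)

lemma transmission_eq_of_forall_adj_iff [DecidableEq α] (hH : H.Connected) {ℓ c : α}
    (hℓ : ∀ z, H.Adj ℓ z ↔ z = c) :
    H.transmission ℓ = H.transmission c + Fintype.card α - 2 := by
  have hadj : H.Adj ℓ c := (hℓ c).2 rfl
  have hcard : 1 ≤ Fintype.card α := Fintype.card_pos_iff.2 ⟨ℓ⟩
  unfold transmission
  rw [← add_sum_erase _ _ (mem_univ ℓ), ← add_sum_erase _ _ (mem_univ ℓ),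
    sum_congr rfl fun y hy => by
      rw [dist_eq_dist_add_one_of_forall_adj_iff hℓ (ne_of_mem_erase hy).symm (hH c y)]]
  push_cast
  rw [sum_add_distrib, sum_const, card_erase_of_mem (mem_univ _), card_univ,
    dist_self, dist_comm, dist_eq_one_iff_adj.2 hadj, nsmul_one, Nat.cast_sub hcard]
  push_cast
  ring

lemma IsTree.cast_card_edgeSet {R : Type*} [Ring R] [Fintype H.edgeSet] (hH : H.IsTree) :
    (Fintype.card H.edgeSet : R) = Fintype.card α - 1 := by
  rw [← edgeFinset_card, ← hH.card_edgeFinset]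
  push_cast
  abel

variable [DecidableRel H.Adj]

lemma sum_dart_snd {M : Type*} [AddCommMonoid M] (g : α → M) :
    ∑ d : H.Dart, g d.snd = ∑ d : H.Dart, g d.fst :=
  Equiv.sum_comp (Dart.symm_involutive.toPerm _) (fun d : H.Dart => g d.fst)

variable [DecidableEq α]

lemma sum_dart_edge {M : Type*} [AddCommMonoid M] (F : H.edgeSet → M) :
    ∑ d : H.Dart, F ⟨d.edge, d.edge_mem⟩ = 2 • ∑ e, F e := by
  rw [← sum_fiberwise univ (fun d : H.Dart => (⟨d.edge, d.edge_mem⟩ : H.edgeSet)),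
    smul_sum]
  refine sum_congr rfl fun e _ => ?_
  rw [sum_congr rfl fun d hd => congrArg F (mem_filter.1 hd).2, sum_const]
  congr 1
  simpa only [Subtype.ext_iff] using H.dart_edge_fiber_card e.1 e.2

lemma IsTree.sum_outward_dart_snd (hH : H.IsTree) (u : α) {M : Type*} [AddCommMonoid M]
    (F : α → M) :
    ∑ d : H.Dart with H.dist u d.fst + 1 = H.dist u d.snd, F d.snd =
      ∑ v ∈ univ.erase u, F v := by
  refine sum_nbij (fun d => d.snd) (fun d hd => ?_) (fun d hd d' hd' h => ?_) (fun v hv => ?_)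
    (fun _ _ => rfl)
  · simp only [mem_filter, mem_univ, true_and] at hd
    refine mem_erase.2 ⟨fun h => ?_, mem_univ _⟩
    rw [h, dist_self] at hd
    omega
  · simp only [coe_filter, mem_univ, true_and, Set.mem_ofPred_eq] at hd hd'
    replace h : d.snd = d'.snd := h
    have hfst := hH.isAcyclic.eq_of_adj_of_dist_add_one_eq (hH.connected u d.snd) d.adj
      (h ▸ d'.adj) hd (h ▸ hd')
    exact (Dart.ext_iff _ _).2 (Prod.ext hfst h)
  · obtain ⟨z, hz, hdz⟩ :=
      (hH.connected u v).exists_adj_dist_add_one_eq (ne_of_mem_erase hv).symm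
    exact ⟨⟨(z, v), hz⟩, by simpa using hdz, rfl⟩

lemma IsTree.sum_dart_dist_fst (hH : H.IsTree) (u : α) :
    ∑ d : H.Dart, (H.dist u d.fst : ℚ) = 2 * H.transmission u - (Fintype.card α - 1) := by
  have inward : ∑ d : H.Dart with ¬ H.dist u d.fst + 1 = H.dist u d.snd, (H.dist u d.fst : ℚ) =
      ∑ d : H.Dart with H.dist u d.fst + 1 = H.dist u d.snd, (H.dist u d.snd : ℚ) := by
    refine sum_nbij' Dart.symm Dart.symm (fun d hd => ?_) (fun d hd => ?_)
      (fun d _ => Dart.symm_symm d) (fun d _ => Dart.symm_symm d) (fun d _ => rfl) <;>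
    · have := hH.dist_eq_dist_add_one_of_adj u d.adj
      simp only [mem_filter, mem_univ, true_and, Dart.symm_toProd, Prod.fst_swap,
        Prod.snd_swap] at hd ⊢
      omega
  have outward (d : H.Dart) (hd : d ∈ ({d | H.dist u d.fst + 1 = H.dist u d.snd} : Finset _)) :
      (H.dist u d.fst : ℚ) + H.dist u d.snd = 2 * (H.dist u d.snd : ℚ) - 1 := by
    rw [← (mem_filter.1 hd).2]
    push_cast
    ring
  have := hH.nonempty
  rw [← sum_filter_add_sum_filter_not univ
      (fun d : H.Dart => H.dist u d.fst + 1 = H.dist u d.snd),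
    inward, ← sum_add_distrib, sum_congr rfl outward,
    hH.sum_outward_dart_snd u fun v => 2 * (H.dist u v : ℚ) - 1, sum_sub_distrib, ← mul_sum,
    sum_erase _ (by simp), sum_const, card_erase_of_mem (mem_univ u), card_univ, nsmul_one,
    Nat.cast_pred Fintype.card_pos, transmission]

lemma IsTree.sum_dart_transmission_fst (hH : H.IsTree) :
    ∑ d : H.Dart, H.transmission d.fst
      = 2 * ∑ v, H.transmission v - Fintype.card α * (Fintype.card α - 1) := by
  calc ∑ d : H.Dart, H.transmission d.fst
      = ∑ v, ∑ d : H.Dart, (H.dist v d.fst : ℚ) := by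
        unfold transmission
        rw [sum_comm]
        exact sum_congr rfl fun v _ => sum_congr rfl fun d _ => by rw [dist_comm]
    _ = _ := by
        rw [sum_congr rfl fun v _ => hH.sum_dart_dist_fst v, sum_sub_distrib,
          ← mul_sum, sum_const, card_univ, nsmul_eq_mul]

end Finite

end SimpleGraph

open SimpleGraph Sum

lemma wienerIndex_eq_sum_transmission {α : Type*} [Fintype α] (H : SimpleGraph α) :
    wienerIndex H = (∑ x, H.transmission x) / 2 :=
  rfl

section TFractal

variable {V : Type*} {T : SimpleGraph V} {m : ℕ}

lemma tFractal_adj_inl_mid {u : V} {e : T.edgeSet} :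
    (tFractal T m).Adj (inl u) (inr (inl e)) ↔ u ∈ (e : Sym2 V) := by
  simp [tFractal]

lemma tFractal_adj_mid {e : T.edgeSet} {z : V ⊕ (T.edgeSet ⊕ T.edgeSet × Fin m)} :
    (tFractal T m).Adj (inr (inl e)) z ↔
      (∃ x ∈ (e : Sym2 V), z = inl x) ∨ ∃ i, z = inr (inr (e, i)) := by
  rcases z with _ | f | ⟨f, j⟩ <;> simp [tFractal]
  exact eq_comm

lemma tFractal_adj_leaf {e : T.edgeSet} {i : Fin m} {z : V ⊕ (T.edgeSet ⊕ T.edgeSet × Fin m)} :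
    (tFractal T m).Adj (inr (inr (e, i))) z ↔ z = inr (inl e) := by
  rcases z with _ | f | ⟨f, j⟩ <;> simp [tFractal]

lemma exists_tFractal_walk {u v : V} (p : T.Walk u v) :
    ∃ q : (tFractal T m).Walk (inl u) (inl v), q.length = 2 * p.length := by
  induction p with
  | nil => exact ⟨.nil, rfl⟩
  | @cons a b _ h _ ih =>
    obtain ⟨q, hq⟩ := ih
    let e : T.edgeSet := ⟨s(a, b), h⟩
    have ha : (tFractal T m).Adj (inl a) (inr (inl e)) :=
      tFractal_adj_inl_mid.2 (Sym2.mem_mk_left a b)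
    have hb : (tFractal T m).Adj (inl b) (inr (inl e)) :=
      tFractal_adj_inl_mid.2 (Sym2.mem_mk_right a b)
    exact ⟨.cons ha (.cons hb.symm q), by simp only [Walk.length_cons, hq]; ring⟩

lemma tFractal_connected (hT : T.Connected) : (tFractal T m).Connected := by
  have : Nonempty V := hT.nonempty
  have reach_inl : ∀ x, ∃ u, (tFractal T m).Reachable (inl u) x := by
    rintro (u | e | ⟨e, i⟩)
    · exact ⟨u, .rfl⟩
    · exact ⟨_, (tFractal_adj_inl_mid.2 (Sym2.out_fst_mem e.1)).reachable⟩
    · exact ⟨_, (tFractal_adj_inl_mid.2 (Sym2.out_fst_mem e.1)).reachable.trans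
        (tFractal_adj_leaf.2 rfl).symm.reachable⟩
  refine ⟨fun x y => ?_⟩
  obtain ⟨u, hu⟩ := reach_inl x
  obtain ⟨v, hv⟩ := reach_inl y
  obtain ⟨p⟩ := hT u v
  obtain ⟨q, -⟩ := exists_tFractal_walk (m := m) p
  exact hu.symm.trans (q.reachable.trans hv)

noncomputable def tFractalPotential (T : SimpleGraph V) (m : ℕ) (u : V) :
    V ⊕ (T.edgeSet ⊕ T.edgeSet × Fin m) → ℕ
  | inl w => 2 * T.dist u w
  | inr (inl e) => Sym2.lift ⟨fun a b => T.dist u a + T.dist u b, fun _ _ => add_comm _ _⟩ e.1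
  | inr (inr (e, _)) =>
    Sym2.lift ⟨fun a b => T.dist u a + T.dist u b, fun _ _ => add_comm _ _⟩ e.1 + 1

lemma tFractalPotential_le_add_one_of_adj (u : V) {x y : V ⊕ (T.edgeSet ⊕ T.edgeSet × Fin m)}
    (h : (tFractal T m).Adj x y) : tFractalPotential T m u x ≤ tFractalPotential T m u y + 1 := by
  have endpoint : ∀ (w : V) (e : T.edgeSet), w ∈ (e : Sym2 V) →
      2 * T.dist u w ≤ tFractalPotential T m u (inr (inl e)) + 1 ∧
        tFractalPotential T m u (inr (inl e)) ≤ 2 * T.dist u w + 1 := by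
    rintro w ⟨e, he⟩ hw
    induction e using Sym2.ind with
    | _ a b =>
      have := (show T.Adj a b from he).diff_dist_adj (u := u)
      rcases Sym2.mem_iff.1 hw with rfl | rfl <;>
        simp only [tFractalPotential, Sym2.lift_mk] <;> omega
  rcases x with w | e | ⟨e, i⟩ <;> rcases y with w' | f | ⟨f, j⟩ <;> simp [tFractal] at h
  · exact (endpoint w f h).1
  · exact (endpoint w' e h).2
  all_goals subst h; simp only [tFractalPotential]; omega

lemma tFractal_dist_inl (hT : T.Connected) (u v : V) :
    (tFractal T m).dist (inl u) (inl v) = 2 * T.dist u v := by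
  refine le_antisymm ?_ ?_
  · obtain ⟨p, hp⟩ := (hT u v).exists_walk_length_eq_dist
    obtain ⟨q, hq⟩ := exists_tFractal_walk (m := m) p
    exact hp ▸ hq ▸ dist_le q
  · have := (tFractal_connected hT (inl v) (inl u)).le_add_dist_of_adj_le_add_one
      (tFractalPotential T m u) fun _ _ => tFractalPotential_le_add_one_of_adj u
    simpa [tFractalPotential, dist_comm] using this

lemma tFractal_dist_leaf (hT : T.Connected) {e : T.edgeSet} {i : Fin m}
    {y : V ⊕ (T.edgeSet ⊕ T.edgeSet × Fin m)} (hy : inr (inr (e, i)) ≠ y) :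
    (tFractal T m).dist (inr (inr (e, i))) y = (tFractal T m).dist (inr (inl e)) y + 1 :=
  dist_eq_dist_add_one_of_forall_adj_iff (fun _ => tFractal_adj_leaf) hy
    (tFractal_connected hT _ _)

variable [Fintype V] [DecidableRel T.Adj]

lemma tFractal_card_edgeSet : Nat.card (tFractal T m).edgeSet = (m + 2) * Nat.card T.edgeSet := by
  let edge : T.Dart ⊕ T.edgeSet × Fin m → (tFractal T m).edgeSet :=
    Sum.elim
      (fun d => ⟨s(inl d.fst, inr (inl ⟨d.edge, d.edge_mem⟩)),
        tFractal_adj_inl_mid.2 (Sym2.mem_mk_left _ _)⟩)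
      (fun p => ⟨s(inr (inl p.1), inr (inr p)), (tFractal_adj_leaf.2 rfl).symm⟩)
  have hinj : Function.Injective edge := by
    rintro (d | ⟨e, i⟩) (d' | ⟨e', i'⟩) h <;> replace h := congrArg Subtype.val h <;>
      simp [edge] at h
    · obtain ⟨hfst, hedge⟩ := h
      rcases (dart_edge_eq_iff d d').1 hedge with rfl | rfl
      · rfl
      · exact absurd hfst.symm d'.adj.ne
    · rw [h.1, h.2]
  have hsurj : Function.Surjective edge := by
    have of_mem (u : V) (f : T.edgeSet) (hu : u ∈ (f : Sym2 V)) :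
        ∃ a, (edge a).1 = s(inl u, inr (inl f)) := by
      obtain ⟨f, hf⟩ := f
      obtain ⟨w, rfl⟩ := Sym2.mem_iff_exists.1 hu
      exact ⟨inl ⟨(u, w), hf⟩, rfl⟩
    rintro ⟨s, hs⟩
    induction s using Sym2.ind with
    | _ x y =>
      rcases x with u | e | ⟨e, i⟩ <;> rcases y with v | f | ⟨f, j⟩ <;>
        simp [tFractal] at hs
      · obtain ⟨a, ha⟩ := of_mem u f hs
        exact ⟨a, Subtype.ext ha⟩
      · obtain ⟨a, ha⟩ := of_mem v e hs
        exact ⟨a, Subtype.ext (ha.trans Sym2.eq_swap)⟩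
      · subst hs
        exact ⟨inr (_, j), rfl⟩
      · subst hs
        exact ⟨inr (_, i), Subtype.ext Sym2.eq_swap⟩
  rw [← Nat.card_congr (Equiv.ofBijective edge ⟨hinj, hsurj⟩)]
  simp only [Nat.card_eq_fintype_card, Fintype.card_sum, Fintype.card_prod, Fintype.card_fin,
    dart_card_eq_twice_card_edges, edgeFinset_card]
  ring

lemma tFractal_isTree (hT : T.IsTree) : (tFractal T m).IsTree := by
  refine isTree_iff_connected_and_card.2 ⟨tFractal_connected hT.connected, ?_⟩
  have hV := hT.card_edgeFinset
  rw [edgeFinset_card] at hV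
  simp only [tFractal_card_edgeSet, Nat.card_eq_fintype_card, Fintype.card_sum, Fintype.card_prod,
    Fintype.card_fin, ← hV]
  ring

lemma tFractal_two_mul_dist_mid (hT : T.IsTree) {e : T.edgeSet} {d : T.Dart} (hd : d.edge = e)
    {y : V ⊕ (T.edgeSet ⊕ T.edgeSet × Fin m)} (hmid : inr (inl e) ≠ y)
    (hleaf : ∀ i, inr (inr (e, i)) ≠ y) :
    2 * (tFractal T m).dist (inr (inl e)) y =
      (tFractal T m).dist (inl d.fst) y + (tFractal T m).dist (inl d.snd) y := by
  have hG := tFractal_isTree (m := m) hT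
  have hmem (x : V) : x ∈ (e : Sym2 V) ↔ x = d.fst ∨ x = d.snd := by
    rw [← hd]
    exact Sym2.mem_iff
  rw [dist_comm, dist_comm (u := inl d.fst), dist_comm (u := inl d.snd)]
  refine (hG.dist_add_dist_eq_two_mul (tFractal_adj_inl_mid.2 ((hmem _).2 (.inl rfl)))
    (tFractal_adj_inl_mid.2 ((hmem _).2 (.inr rfl))) (fun h => d.adj.ne (inl_injective h))
    ?_).symm
  obtain ⟨z, hz, hdz⟩ := (hG.connected y _).exists_adj_dist_add_one_eq hmid.symm
  rcases tFractal_adj_mid.1 hz.symm with ⟨x, hx, rfl⟩ | ⟨i, rfl⟩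
  · rcases (hmem x).1 hx with rfl | rfl <;> omega
  · have := tFractal_dist_leaf hT.connected (hleaf i)
    rw [dist_comm, dist_comm (v := y)] at this
    omega

variable [DecidableEq V]

lemma tFractal_two_mul_transmission_mid (hT : T.IsTree) {e : T.edgeSet} {d : T.Dart}
    (hd : d.edge = e) :
    2 * (tFractal T m).transmission (inr (inl e)) = (tFractal T m).transmission (inl d.fst) +
      (tFractal T m).transmission (inl d.snd) - 2 * (m + 1) := by
  have hadj (x : V) (hx : x = d.fst ∨ x = d.snd) : (tFractal T m).Adj (inl x) (inr (inl e)) :=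
    tFractal_adj_inl_mid.2 (hd ▸ Sym2.mem_iff.2 hx)
  have dist_leaf (x : V) (hx : x = d.fst ∨ x = d.snd) (i : Fin m) :
      (tFractal T m).dist (inl x) (inr (inr (e, i))) = 2 := by
    rw [dist_comm, tFractal_dist_leaf hT.connected (by simp), dist_comm,
      dist_eq_one_iff_adj.2 (hadj x hx)]
  have pointwise (y : V ⊕ (T.edgeSet ⊕ T.edgeSet × Fin m)) :
      2 * ((tFractal T m).dist (inr (inl e)) y : ℚ) =
        (tFractal T m).dist (inl d.fst) y + (tFractal T m).dist (inl d.snd) y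
          - (if inr (inl e) = y then 2 else 0)
          - ∑ i, (if inr (inr (e, i)) = y then 2 else 0) := by
    by_cases hmid : inr (inl e) = y
    · subst hmid
      simp only [dist_self, dist_eq_one_iff_adj.2 (hadj _ (.inl rfl)),
        dist_eq_one_iff_adj.2 (hadj _ (.inr rfl)), ↓reduceIte, inr.injEq, reduceCtorEq,
        sum_const_zero]
      norm_num
    by_cases hleaf : ∃ i, inr (inr (e, i)) = y
    · obtain ⟨i, rfl⟩ := hleaf
      simp [dist_leaf _ (.inl rfl), dist_leaf _ (.inr rfl),
        dist_eq_one_iff_adj.2 (tFractal_adj_leaf.2 rfl).symm]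
    rw [not_exists] at hleaf
    simp only [if_neg hmid, if_neg (hleaf _), sum_const_zero, sub_zero]
    exact_mod_cast tFractal_two_mul_dist_mid hT hd hmid hleaf
  unfold transmission
  rw [mul_sum, sum_congr rfl fun y _ => pointwise y, sum_sub_distrib,
    sum_sub_distrib, sum_add_distrib, sum_comm (s := univ) (t := univ)
      (f := fun y i => if inr (inr (e, i)) = y then (2 : ℚ) else 0)]
  simp only [sum_ite_eq, mem_univ, ↓reduceIte, sum_const, card_univ, Fintype.card_fin,
    nsmul_eq_mul]
  ring

lemma tFractal_sum_dist_inl_mid (hT : T.IsTree) (u : V) :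
    ∑ e : T.edgeSet, ((tFractal T m).dist (inl u) (inr (inl e)) : ℚ) =
      2 * T.transmission u - (Fintype.card V - 1) := by
  have hdart (d : T.Dart) : ((tFractal T m).dist (inl u) (inr (inl ⟨d.edge, d.edge_mem⟩)) : ℚ)
      = T.dist u d.fst + T.dist u d.snd := by
    have := tFractal_two_mul_dist_mid (m := m) (e := ⟨d.edge, d.edge_mem⟩) hT rfl (y := inl u)
      (by simp) (by simp)
    rw [tFractal_dist_inl hT.connected, tFractal_dist_inl hT.connected,
      dist_comm (u := d.fst), dist_comm (u := d.snd)] at this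
    rw [dist_comm]
    exact_mod_cast (by omega : _ = T.dist u d.fst + T.dist u d.snd)
  have h := sum_dart_edge fun e : T.edgeSet => ((tFractal T m).dist (inl u) (inr (inl e)) : ℚ)
  rw [sum_congr rfl fun d _ => hdart d, sum_add_distrib,
    sum_dart_snd fun v => (T.dist u v : ℚ), hT.sum_dart_dist_fst, two_nsmul] at h
  linarith

lemma tFractal_transmission_inl (hT : T.IsTree) (u : V) :
    (tFractal T m).transmission (inl u) =
      (2 * m + 4) * T.transmission u - (Fintype.card V - 1) := by
  have hleaf (e : T.edgeSet) (i : Fin m) : (tFractal T m).dist (inl u) (inr (inr (e, i))) =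
      (tFractal T m).dist (inl u) (inr (inl e)) + 1 := by
    rw [dist_comm, tFractal_dist_leaf hT.connected (by simp), dist_comm]
  unfold transmission
  simp only [Fintype.sum_sum_type, Fintype.sum_prod_type, tFractal_dist_inl hT.connected, hleaf]
  push_cast
  simp only [sum_const, card_univ, Fintype.card_fin, nsmul_eq_mul,
    ← mul_sum, sum_add_distrib, mul_add, mul_one, tFractal_sum_dist_inl_mid hT u,
    hT.cast_card_edgeSet]
  unfold transmission
  ring

lemma tFractal_sum_transmission_mid (hT : T.IsTree) :
    ∑ e : T.edgeSet, (tFractal T m).transmission (inr (inl e)) =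
      (m + 2) * (2 * ∑ v, T.transmission v - Fintype.card V * (Fintype.card V - 1))
        - (Fintype.card V - 1) ^ 2 - (m + 1) * (Fintype.card V - 1) := by
  have hmid (d : T.Dart) : (tFractal T m).transmission (inr (inl ⟨d.edge, d.edge_mem⟩)) =
      ((tFractal T m).transmission (inl d.fst) + (tFractal T m).transmission (inl d.snd)) / 2
        - (m + 1) := by
    linarith [tFractal_two_mul_transmission_mid (m := m) hT (e := ⟨d.edge, d.edge_mem⟩) rfl]
  have h := sum_dart_edge fun e : T.edgeSet => (tFractal T m).transmission (inr (inl e))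
  rw [sum_congr rfl fun d _ => hmid d, sum_sub_distrib, ← sum_div,
    sum_add_distrib, sum_dart_snd fun v => (tFractal T m).transmission (inl v),
    sum_congr rfl fun d _ => tFractal_transmission_inl hT d.fst, sum_sub_distrib,
    ← mul_sum, hT.sum_dart_transmission_fst] at h
  simp only [sum_const, card_univ, dart_card_eq_twice_card_edges, edgeFinset_card,
    nsmul_eq_mul] at h
  push_cast at h
  rw [hT.cast_card_edgeSet] at h
  linear_combination -h / 2

end TFractal

theorem wiener_tFractal_general {V : Type*} [Fintype V] [DecidableEq V]
    (T : SimpleGraph V) [DecidableRel T.Adj] (hT : T.IsTree) (m : ℕ) :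
    wienerIndex (tFractal T m) =
      2 * ((m : ℚ) + 2) ^ 2 * wienerIndex T
        - ((m : ℚ) + 2) * (Fintype.card V : ℚ) ^ 2
        - ((m : ℚ) - 1) * ((m : ℚ) + 2) * (Fintype.card V : ℚ)
        + (m : ℚ) ^ 2 + 2 * (m : ℚ) := by
  have hleaf (e : T.edgeSet) (i : Fin m) := transmission_eq_of_forall_adj_iff
    (tFractal_connected (m := m) hT.connected) fun _ => tFractal_adj_leaf (e := e) (i := i)
  rw [wienerIndex_eq_sum_transmission, wienerIndex_eq_sum_transmission]
  simp only [Fintype.sum_sum_type, Fintype.sum_prod_type, hleaf, tFractal_transmission_inl hT,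
    sum_add_distrib, sum_sub_distrib, sum_const, card_univ,
    Fintype.card_fin, nsmul_eq_mul, ← mul_sum, tFractal_sum_transmission_mid hT,
    Fintype.card_sum, Fintype.card_prod]
  push_cast
  rw [hT.cast_card_edgeSet]
  ring

theorem wiener_tFractal {V : Type*} [Fintype V] [DecidableEq V] [Nonempty V]
    (T : SimpleGraph V) [DecidableRel T.Adj] (hT : T.IsTree) (m : ℕ) (hm : 1 ≤ m) :
    wienerIndex (tFractal T m) =
      2 * ((m : ℚ) + 2) ^ 2 * wienerIndex T
        - ((m : ℚ) + 2) * (Fintype.card V : ℚ) ^ 2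
        - ((m : ℚ) - 1) * ((m : ℚ) + 2) * (Fintype.card V : ℚ)
        + (m : ℚ) ^ 2 + 2 * (m : ℚ) :=
  wiener_tFractal_general T hT m
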